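/- Let f(z) = 1/z + e^z and g(z) = 1/z + e^z/z = (1 + e^z)/z, meromorphic on ℂ. Then f − 1/z = e^z and g − 1/z = e^z/z have no zeros (so f and g share 1/z CM in the sense of vanishing), but 1/f − z = −z² e^z/(1 + z e^z) has a zero of order exactly 2 at z = 0, while 1/g − z = −z e^z/(1 + e^z) has a zero of order exactly 1 at z = 0; consequently 1/f and 1/g share the function z IM but not CM in the sense of vanishing. -/

import Mathlib

open Complex Topology
open scoped Classical

/-- The order of a meromorphic function at a point (junk value `0` if `f` is
not meromorphic at `z`).  Order `⊤` means `f ≡ 0` near `z`, a positive order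
is the multiplicity of a zero, a negative order is minus the multiplicity of
a pole. -/
noncomputable def morder (f : ℂ → ℂ) (z : ℂ) : WithTop ℤ :=
  if MeromorphicAt f z then meromorphicOrderAt f z else 0

/-- `f(z) = α(z)` in the sense of value: at a pole of `α` it means that `f`
also has a pole at `z`; elsewhere it means that the meromorphic function
`f - α` vanishes at `z`. -/
def ValueEqAt (f α : ℂ → ℂ) (z : ℂ) : Prop :=
  (morder α z < 0 ∧ morder f z < 0) ∨ (0 ≤ morder α z ∧ 0 < morder (f - α) z)

/-- `f` and `g` share the function `α` IM in the sense of value on `D`. -/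
def ShareIMValue (f g α : ℂ → ℂ) (D : Set ℂ) : Prop :=
  ∀ z ∈ D, (ValueEqAt f α z ↔ ValueEqAt g α z)

/-- `f` and `g` share the function `α` CM in the sense of value on `D`:
at points where `α` is finite the orders of the zeros of `f - α` and `g - α`
agree, and at poles of `α` the orders of the zeros of `1/f - 1/α` and
`1/g - 1/α` agree. -/
def ShareCMValue (f g α : ℂ → ℂ) (D : Set ℂ) : Prop :=
  ∀ z ∈ D,
    (0 ≤ morder α z → ∀ m : ℕ, 1 ≤ m →
      (morder (f - α) z = (m : ℤ) ↔ morder (g - α) z = (m : ℤ))) ∧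
    (morder α z < 0 → ∀ m : ℕ, 1 ≤ m →
      (morder (f⁻¹ - α⁻¹) z = (m : ℤ) ↔ morder (g⁻¹ - α⁻¹) z = (m : ℤ)))

/-- `f` and `g` share the function `α` IM in the sense of vanishing on `D`:
`f - α` and `g - α` have the same zeros (ignoring multiplicities). -/
def ShareIMVanishing (f g α : ℂ → ℂ) (D : Set ℂ) : Prop :=
  ∀ z ∈ D, (0 < morder (f - α) z ↔ 0 < morder (g - α) z)

/-- `f` and `g` share the function `α` CM in the sense of vanishing on `D`:
`f - α` and `g - α` have the same zeros with the same multiplicities. -/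
def ShareCMVanishing (f g α : ℂ → ℂ) (D : Set ℂ) : Prop :=
  ∀ z ∈ D, ∀ m : ℕ, 1 ≤ m →
    (morder (f - α) z = (m : ℤ) ↔ morder (g - α) z = (m : ℤ))

/-! `f - 1/z = e^z` has no zeros and `g - 1/z = e^z/z` only a pole, so `f` and `g` share `1/z`
CM for free. Near `0`, `1/f - z = z² · (-e^z/(1 + z e^z))` and `1/g - z = z · (-e^z/(1 + e^z))`,
giving orders `2` and `1`. At `z₀ ≠ 0` the function `1/z` has a finite nonzero limit, so
`1/F - z → 0` iff `F - 1/z → 0` there, and neither `1/f - z` nor `1/g - z` vanishes at `z₀`. -/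

open Filter

theorem morder_of_meromorphicAt {f : ℂ → ℂ} {x : ℂ} (hf : MeromorphicAt f x) :
    morder f x = meromorphicOrderAt f x :=
  if_pos hf

theorem morder_eq_of_eventuallyEq_zpow_mul {F h : ℂ → ℂ} {x : ℂ} {n : ℤ}
    (hh : AnalyticAt ℂ h x) (hx : h x ≠ 0) (hF : F =ᶠ[𝓝[≠] x] fun z => (z - x) ^ n * h z) :
    morder F x = n := by
  have hm : MeromorphicAt F x :=
    (by fun_prop : MeromorphicAt (fun z => (z - x) ^ n * h z) x).congr hF.symm
  rw [morder_of_meromorphicAt hm, meromorphicOrderAt_eq_int_iff hm]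
  exact ⟨h, hh, hx, hF⟩

theorem tendsto_sub_nhds_zero_iff_of_tendsto {ι G : Type*} [AddGroup G]
    [TopologicalSpace G] [IsTopologicalAddGroup G] {l : Filter ι} {u v : ι → G} {b : G}
    (hv : Tendsto v l (𝓝 b)) : Tendsto (u - v) l (𝓝 0) ↔ Tendsto u l (𝓝 b) :=
  ⟨fun h => by simpa using h.add hv, fun h => by
    have := h.sub hv
    rwa [sub_self] at this⟩

theorem meromorphicOrderAt_inv_sub_inv_pos_iff {𝕜 : Type*} [NontriviallyNormedField 𝕜]
    {f α : 𝕜 → 𝕜} {x a : 𝕜} (hf : MeromorphicAt f x) (hα : MeromorphicAt α x)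
    (hαa : Tendsto α (𝓝[≠] x) (𝓝 a)) (ha : a ≠ 0) :
    0 < meromorphicOrderAt (f⁻¹ - α⁻¹) x ↔ 0 < meromorphicOrderAt (f - α) x := by
  rw [← tendsto_zero_iff_meromorphicOrderAt_pos (hf.inv.sub hα.inv),
    ← tendsto_zero_iff_meromorphicOrderAt_pos (hf.sub hα),
    tendsto_sub_nhds_zero_iff_of_tendsto (v := α⁻¹) (hαa.inv₀ ha),
    tendsto_sub_nhds_zero_iff_of_tendsto hαa]
  exact tendsto_inv_iff₀ ha

theorem morder_inv_sub_inv_pos_iff {f α : ℂ → ℂ} {x a : ℂ} (hf : MeromorphicAt f x)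
    (hα : MeromorphicAt α x) (hαa : Tendsto α (𝓝[≠] x) (𝓝 a)) (ha : a ≠ 0) :
    0 < morder (f⁻¹ - α⁻¹) x ↔ 0 < morder (f - α) x := by
  rw [morder_of_meromorphicAt (hf.inv.sub hα.inv), morder_of_meromorphicAt (hf.sub hα)]
  exact meromorphicOrderAt_inv_sub_inv_pos_iff hf hα hαa ha

theorem shareCMVanishing_of_not_pos {f g α : ℂ → ℂ} {D : Set ℂ}
    (hf : ∀ z ∈ D, ¬ 0 < morder (f - α) z) (hg : ∀ z ∈ D, ¬ 0 < morder (g - α) z) :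
    ShareCMVanishing f g α D := by
  intro z hz m hm
  have hm' : (0 : WithTop ℤ) < (m : ℤ) := by exact_mod_cast hm
  exact iff_of_false (fun h => hf z hz (h ▸ hm')) (fun h => hg z hz (h ▸ hm'))

theorem morder_exp (z : ℂ) : morder exp z = (0 : ℤ) :=
  morder_eq_of_eventuallyEq_zpow_mul analyticAt_cexp (exp_ne_zero z) (.of_forall fun w => by simp)

theorem morder_exp_div_self_nonpos (z : ℂ) : morder (fun w => exp w / w) z ≤ 0 := by
  rcases eq_or_ne z 0 with rfl | hz
  · rw [morder_eq_of_eventuallyEq_zpow_mul (n := -1) analyticAt_cexp (exp_ne_zero 0)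
      (.of_forall fun w => by simp [div_eq_inv_mul])]
    decide
  · rw [morder_eq_of_eventuallyEq_zpow_mul (n := 0) (h := fun w => exp w / w)
      (by fun_prop (disch := exact hz)) (div_ne_zero (exp_ne_zero z) hz)
      (.of_forall fun w => by simp)]
    rfl

theorem eventually_inv_inv_add_exp_sub_self :
    ∀ᶠ z in 𝓝[≠] (0 : ℂ), (z⁻¹ + exp z)⁻¹ - z = -(z ^ 2 * exp z) / (1 + z * exp z) := by
  have hden : ∀ᶠ z in 𝓝 (0 : ℂ), 1 + z * exp z ≠ 0 :=
    (by fun_prop : Continuous fun z : ℂ => 1 + z * exp z).continuousAt.eventually_ne (by simp)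
  filter_upwards [self_mem_nhdsWithin, nhdsWithin_le_nhds hden] with z (hz : z ≠ 0) hden
  field_simp
  ring

theorem eventually_inv_inv_add_exp_div_self_sub_self :
    ∀ᶠ z in 𝓝[≠] (0 : ℂ), (z⁻¹ + exp z / z)⁻¹ - z = -(z * exp z) / (1 + exp z) := by
  have hden : ∀ᶠ z in 𝓝 (0 : ℂ), 1 + exp z ≠ 0 :=
    (by fun_prop : Continuous fun z : ℂ => 1 + exp z).continuousAt.eventually_ne (by norm_num)
  filter_upwards [self_mem_nhdsWithin, nhdsWithin_le_nhds hden] with z (hz : z ≠ 0) hden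
  field_simp
  ring

theorem morder_inv_inv_add_exp_sub_id : morder ((fun z : ℂ => z⁻¹ + exp z)⁻¹ - id) 0 = (2 : ℤ) :=
  morder_eq_of_eventuallyEq_zpow_mul (h := fun z => -exp z / (1 + z * exp z))
    (by fun_prop (disch := simp)) (by simp) (by
      filter_upwards [eventually_inv_inv_add_exp_sub_self] with z hz
      simp only [Pi.sub_apply, Pi.inv_apply, id, hz, sub_zero, zpow_ofNat]
      ring)

theorem morder_inv_inv_add_exp_div_self_sub_id :
    morder ((fun z : ℂ => z⁻¹ + exp z / z)⁻¹ - id) 0 = (1 : ℤ) :=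
  morder_eq_of_eventuallyEq_zpow_mul (h := fun z => -exp z / (1 + exp z))
    (by fun_prop (disch := norm_num)) (by norm_num) (by
      filter_upwards [eventually_inv_inv_add_exp_div_self_sub_self] with z hz
      simp only [Pi.sub_apply, Pi.inv_apply, id, hz, sub_zero, zpow_one]
      ring)

/-- Example 4: `f = 1/z + e^z` and `g = 1/z + e^z/z` share
`1/z` CM in the sense of vanishing, but `1/f - z` has a zero of order exactly
`2` at `0` while `1/g - z` has a zero of order exactly `1` there; hence `1/f`
and `1/g` share the function `z` IM but not CM in the sense of vanishing. -/
theorem example_four (f g α : ℂ → ℂ)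
    (hfdef : f = fun z => z⁻¹ + exp z)
    (hgdef : g = fun z => z⁻¹ + exp z / z)
    (hαdef : α = fun z => z⁻¹) :
    (∀ z, f z - α z = exp z) ∧
    (∀ z, g z - α z = exp z / z) ∧
    (∀ z, ¬ 0 < morder (f - α) z) ∧
    (∀ z, ¬ 0 < morder (g - α) z) ∧
    ShareCMVanishing f g α Set.univ ∧
    (∀ᶠ z in 𝓝[≠] (0 : ℂ), (f z)⁻¹ - z = -(z ^ 2 * exp z) / (1 + z * exp z)) ∧
    morder (f⁻¹ - α⁻¹) 0 = (2 : ℤ) ∧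
    (∀ᶠ z in 𝓝[≠] (0 : ℂ), (g z)⁻¹ - z = -(z * exp z) / (1 + exp z)) ∧
    morder (g⁻¹ - α⁻¹) 0 = (1 : ℤ) ∧
    ShareIMVanishing f⁻¹ g⁻¹ α⁻¹ Set.univ ∧
    ¬ ShareCMVanishing f⁻¹ g⁻¹ α⁻¹ Set.univ := by
  have hfα : ∀ z, f z - α z = exp z := by simp [hfdef, hαdef]
  have hgα : ∀ z, g z - α z = exp z / z := by simp [hgdef, hαdef]
  have hfα_ne : ∀ z, ¬ 0 < morder (f - α) z := fun z => by
    rw [show f - α = exp from funext hfα, morder_exp]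
    exact lt_irrefl _
  have hgα_ne : ∀ z, ¬ 0 < morder (g - α) z := fun z => by
    rw [show g - α = _ from funext hgα]
    exact (morder_exp_div_self_nonpos z).not_gt
  have hf_eq : ∀ᶠ z in 𝓝[≠] (0 : ℂ), (f z)⁻¹ - z = -(z ^ 2 * exp z) / (1 + z * exp z) := by
    simpa [hfdef] using eventually_inv_inv_add_exp_sub_self
  have hg_eq : ∀ᶠ z in 𝓝[≠] (0 : ℂ), (g z)⁻¹ - z = -(z * exp z) / (1 + exp z) := by
    simpa [hgdef] using eventually_inv_inv_add_exp_div_self_sub_self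
  have hαinv : α⁻¹ = id := by
    funext z
    simp [hαdef]
  have hf_ord : morder (f⁻¹ - α⁻¹) 0 = (2 : ℤ) := by
    rw [hαinv, hfdef]
    exact morder_inv_inv_add_exp_sub_id
  have hg_ord : morder (g⁻¹ - α⁻¹) 0 = (1 : ℤ) := by
    rw [hαinv, hgdef]
    exact morder_inv_inv_add_exp_div_self_sub_id
  have share_IM : ShareIMVanishing f⁻¹ g⁻¹ α⁻¹ Set.univ := by
    intro z _
    rcases eq_or_ne z 0 with rfl | hz
    · rw [hf_ord, hg_ord]
      decide
    have hαz : Tendsto α (𝓝[≠] z) (𝓝 z⁻¹) := by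
      subst hαdef; exact (continuousAt_inv₀ hz).tendsto.mono_left nhdsWithin_le_nhds
    have hαm : MeromorphicAt α z := by subst hαdef; fun_prop
    rw [morder_inv_sub_inv_pos_iff (by subst hfdef; fun_prop) hαm hαz (inv_ne_zero hz),
      morder_inv_sub_inv_pos_iff (by subst hgdef; fun_prop) hαm hαz (inv_ne_zero hz)]
    exact iff_of_false (hfα_ne z) (hgα_ne z)
  have not_share_CM : ¬ ShareCMVanishing f⁻¹ g⁻¹ α⁻¹ Set.univ := fun h => by
    have := (h 0 trivial 2 one_le_two).1 (by exact_mod_cast hf_ord)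
    rw [hg_ord] at this
    exact absurd this (by decide)
  exact ⟨hfα, hgα, hfα_ne, hgα_ne, shareCMVanishing_of_not_pos (fun z _ => hfα_ne z)
    (fun z _ => hgα_ne z), hf_eq, hf_ord, hg_eq, hg_ord, share_IM, not_share_CM⟩
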